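/- Let f be an asymptotically identical transformation of G = ℝ × ℝ³ and let I = (a, b] = (a₁,b₁] × (a₂,b₂] × (a₃,b₃] ⊆ ℝ³ be a half-open interval with aᵢ < bᵢ. For every ε with 0 < ε < min{b₁−a₁, b₂−a₂, b₃−a₃}/2, set I₋ε := (a+ε, b−ε] and I₊ε := (a−ε, b+ε] (where a±ε means adding ±ε to each coordinate). Then there exists t₀ such that for all t ≥ t₀ one has the inclusions of time-t cross-sections I₋εᶜ(t) ⊆ f(Iᶜ)(t) ⊆ I₊εᶜ(t). -/

import Mathlib

open Filter Topology Set

noncomputable section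

/-- Euclidean 3-space. -/
abbrev E3 : Type := EuclideanSpace ℝ (Fin 3)

/-- The Galilean space-time `G = ℝ × ℝ³`. -/
abbrev Gal : Type := ℝ × E3

/-- A transformation (homeomorphism) of `G` is causal if it preserves the time
ordering of events: `P_T(u) < P_T(w)` implies `P_T(f(u)) < P_T(f(w))`. -/
def Causal (f : Gal ≃ₜ Gal) : Prop :=
  ∀ u w : Gal, u.1 < w.1 → (f u).1 < (f w).1

/-- The semitrajectory in `G` which is the graph of the curve `γ` on `[t₀, ∞)`. -/
def semitraj (t₀ : ℝ) (γ : ℝ → E3) : Set Gal :=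
  (fun t => (t, γ t)) '' Set.Ici t₀

/-- `S ⊆ G` is a semitrajectory: the graph of a continuous curve `γ : [t₀, ∞) → ℝ³`. -/
def IsSemitraj (S : Set Gal) : Prop :=
  ∃ (t₀ : ℝ) (γ : ℝ → E3), ContinuousOn γ (Set.Ici t₀) ∧ S = semitraj t₀ γ

/-- `S` is an asymptotically regular semitrajectory with asymptotic velocity `v`,
i.e. `S` is the graph of a continuous curve `γ : [t₀, ∞) → ℝ³` with `γ(t)/t → v`. -/
def HasAsympVel (S : Set Gal) (v : E3) : Prop :=
  ∃ (t₀ : ℝ) (γ : ℝ → E3), ContinuousOn γ (Set.Ici t₀) ∧ S = semitraj t₀ γ ∧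
    Tendsto (fun t : ℝ => t⁻¹ • γ t) atTop (𝓝 v)

/-- `F` is the asymptotic transform of `f`: for every `v`, every asymptotically regular
semitrajectory `S` with `ω(S) = v` has `ω(f(S)) = F v`.  (In particular the existence of
such an `F` says exactly that `f` is asymptotically regular at every point.) -/
def IsAsympTransform (f : Gal ≃ₜ Gal) (F : E3 → E3) : Prop :=
  ∀ (v : E3) (S : Set Gal), HasAsympVel S v → HasAsympVel (f '' S) (F v)

/-- `f` is asymptotically regular: at every `v ∈ V` there is a `v′` such that every
asymptotically regular semitrajectory with asymptotic velocity `v` is mapped to one with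
asymptotic velocity `v′`. -/
def AsympReg (f : Gal ≃ₜ Gal) : Prop :=
  ∃ F : E3 → E3, IsAsympTransform f F

/-- `f` is an asymptotic homeomorphism: both `f` and `f⁻¹` are asymptotically regular. -/
def AsympHomeo (f : Gal ≃ₜ Gal) : Prop := AsympReg f ∧ AsympReg f.symm

/-- `f` is an asymptotically identical transformation: a causal asymptotic
homeomorphism with `f⁺ = id`. -/
def AsympIdentical (f : Gal ≃ₜ Gal) : Prop :=
  Causal f ∧ AsympHomeo f ∧ IsAsympTransform f (id : E3 → E3)

/-- `f` is an asymptotically Euclidean transformation: a causal asymptotic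
homeomorphism with `f⁺(v) = R v − v₀` for some orthogonal `R` and `v₀ ∈ ℝ³`. -/
def AsympEuclidean (f : Gal ≃ₜ Gal) : Prop :=
  Causal f ∧ AsympHomeo f ∧
    ∃ (R : E3 ≃ₗᵢ[ℝ] E3) (v₀ : E3), IsAsympTransform f (fun v => R v - v₀)

/-- `Δᶜ := {(t, v t) ∈ G : t ≥ 0, v ∈ Δ}` for `Δ ⊆ ℝ³`. -/
def cone (Δ : Set E3) : Set Gal := {p : Gal | ∃ t ≥ (0 : ℝ), ∃ v ∈ Δ, p = (t, t • v)}

/-- The time-`t` cross-section `A(t) := {x ∈ ℝ³ : (t,x) ∈ A}` of `A ⊆ G`. -/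
def crossSec (A : Set Gal) (t : ℝ) : Set E3 := {x : E3 | (t, x) ∈ A}

/-- The half-open interval `(a, b] = (a₁,b₁] × (a₂,b₂] × (a₃,b₃] ⊆ ℝ³`. -/
def interval (a b : Fin 3 → ℝ) : Set E3 := {v : E3 | ∀ i, a i < v i ∧ v i ≤ b i}


/-!
Both inclusions are proved by contradiction and compactness. Were one to fail at arbitrarily
late times, there would be events `p n` whose velocities `p.2 / p.1` converge to some `v` in the
closed box, while the velocities of their images (under `f` for the outer inclusion, under `f⁻¹`,
whose asymptotic transform is also the identity, for the inner one) stay `ε` away from `v`; by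
causality the times of both the events and their images tend to infinity.
Along a subsequence with increasing times, interpolating the velocities piecewise linearly gives
a semitrajectory through these events with asymptotic velocity `v`. Its image has asymptotic
velocity `v` again, so the velocities of the image events converge to `v`: a contradiction.
-/

open Metric

section PiecewiseLinear

variable {E : Type*} [NormedAddCommGroup E] [NormedSpace ℝ E]

def linearPiece (s : ℕ → ℝ) (y : ℕ → E) (n : ℕ) (t : ℝ) : E :=
  AffineMap.lineMap (y n) (y (n + 1)) ((t - s n) / (s (n + 1) - s n))

open Classical in
def piecewiseLinear (s : ℕ → ℝ) (y : ℕ → E) (t : ℝ) : E :=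
  if h : ∃ n, t < s (n + 1) then linearPiece s y (Nat.find h) t else y 0

variable {s : ℕ → ℝ} {y : ℕ → E} {n : ℕ} {t : ℝ}

theorem continuous_linearPiece : Continuous (linearPiece s y n) :=
  AffineMap.lineMap_continuous.comp (by fun_prop)

theorem linearPiece_mem_segment (hs : StrictMono s) (ht : t ∈ Icc (s n) (s (n + 1))) :
    linearPiece s y n t ∈ segment ℝ (y n) (y (n + 1)) := by
  have hlt : 0 < s (n + 1) - s n := sub_pos.2 (hs n.lt_succ_self)
  rw [segment_eq_image_lineMap]
  refine ⟨_, ⟨div_nonneg (by linarith [ht.1]) hlt.le, ?_⟩, rfl⟩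
  rw [div_le_one hlt]
  linarith [ht.2]

theorem piecewiseLinear_eq_of_mem_Ico (hs : StrictMono s) (ht : t ∈ Ico (s n) (s (n + 1))) :
    piecewiseLinear s y t = linearPiece s y n t := by
  have h : ∃ m, t < s (m + 1) := ⟨n, ht.2⟩
  have hfind : Nat.find h = n := (Nat.find_eq_iff h).2
    ⟨ht.2, fun m hm hlt => (hs.monotone hm).not_gt (ht.1.trans_lt hlt)⟩
  rw [piecewiseLinear, dif_pos h, hfind]

theorem piecewiseLinear_apply_node (hs : StrictMono s) : piecewiseLinear s y (s n) = y n := by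
  rw [piecewiseLinear_eq_of_mem_Ico hs ⟨le_rfl, hs n.lt_succ_self⟩]
  simp [linearPiece]

theorem piecewiseLinear_eq_of_mem_Icc (hs : StrictMono s) (ht : t ∈ Icc (s n) (s (n + 1))) :
    piecewiseLinear s y t = linearPiece s y n t := by
  rcases ht.2.lt_or_eq with hlt | rfl
  · exact piecewiseLinear_eq_of_mem_Ico hs ⟨ht.1, hlt⟩
  · rw [piecewiseLinear_apply_node hs, linearPiece, div_self (sub_pos.2 (hs n.lt_succ_self)).ne',
      AffineMap.lineMap_apply_one]

theorem exists_mem_Ico_of_le (hs : StrictMono s) (hs_top : Tendsto s atTop atTop) {m : ℕ}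
    (ht : s m ≤ t) : ∃ n, m ≤ n ∧ t ∈ Ico (s n) (s (n + 1)) := by
  classical
  have h : ∃ n, t < s (n + 1) := (hs_top.eventually_gt_atTop t).exists_forall_of_atTop.imp
    fun n hn => hn (n + 1) n.le_succ
  refine ⟨Nat.find h, ?_, ?_, Nat.find_spec h⟩
  · by_contra! hlt
    exact (Nat.find_spec h).not_ge (ht.trans' (hs.monotone hlt))
  · cases hN : Nat.find h with
    | zero => exact (hs.monotone m.zero_le).trans ht
    | succ k => exact not_lt.1 (Nat.find_min h (by omega : k < Nat.find h))

theorem continuousOn_piecewiseLinear (hs : StrictMono s) (hs_top : Tendsto s atTop atTop) :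
    ContinuousOn (piecewiseLinear s y) (Ici (s 0)) := by
  have hcover : ⋃ n, Icc (s n) (s (n + 1)) = Ici (s 0) := by
    refine Subset.antisymm (iUnion_subset fun n t ht => hs.monotone n.zero_le |>.trans ht.1) ?_
    intro t ht
    obtain ⟨n, -, hn⟩ := exists_mem_Ico_of_le hs hs_top ht
    exact mem_iUnion.2 ⟨n, Ico_subset_Icc_self hn⟩
  have hlf : LocallyFinite fun n => Icc (s n) (s (n + 1)) := by
    intro t
    obtain ⟨m, hm⟩ := (hs_top.eventually_gt_atTop t).exists
    exact ⟨Iio (s m), Iio_mem_nhds hm, (finite_lt_nat m).subset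
      fun n ⟨u, hu, hum⟩ => hs.lt_iff_lt.1 (hu.1.trans_lt hum)⟩
  rw [← hcover]
  exact hlf.continuousOn_iUnion (fun n => isClosed_Icc) fun n =>
    continuous_linearPiece.continuousOn.congr fun t ht => piecewiseLinear_eq_of_mem_Icc hs ht

theorem tendsto_piecewiseLinear (hs : StrictMono s) (hs_top : Tendsto s atTop atTop) {v : E}
    (hy : Tendsto y atTop (𝓝 v)) : Tendsto (piecewiseLinear s y) atTop (𝓝 v) := by
  refine nhds_basis_ball.tendsto_right_iff.2 fun δ hδ => ?_
  obtain ⟨m, hm⟩ := eventually_atTop.1 (hy.eventually (ball_mem_nhds v hδ))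
  filter_upwards [eventually_ge_atTop (s m)] with t ht
  obtain ⟨n, hmn, htn⟩ := exists_mem_Ico_of_le hs hs_top ht
  rw [piecewiseLinear_eq_of_mem_Ico hs htn]
  exact (convex_ball v δ).segment_subset (hm n hmn) (hm (n + 1) (hmn.trans n.le_succ))
    (linearPiece_mem_segment hs (Ico_subset_Icc_self htn))

end PiecewiseLinear

def velocity (p : Gal) : E3 := p.1⁻¹ • p.2

theorem mem_cone_iff {Δ : Set E3} {p : Gal} (hp : 0 < p.1) :
    p ∈ cone Δ ↔ velocity p ∈ Δ := by
  constructor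
  · rintro ⟨t, -, v, hv, rfl⟩
    rwa [velocity, inv_smul_smul₀ hp.ne']
  · intro h
    exact ⟨p.1, hp.le, velocity p, h, by rw [velocity, smul_inv_smul₀ hp.ne']⟩

theorem eventually_crossSec_subset_iff {A B : Set Gal} :
    (∀ᶠ t in atTop, crossSec A t ⊆ crossSec B t) ↔
      ∀ᶠ q in comap Prod.fst atTop, q ∈ A → q ∈ B := by
  simp only [eventually_comap, crossSec, subset_def, mem_ofPred_eq, Prod.forall]
  exact eventually_congr (.of_forall fun t =>
    ⟨fun h _ x hτ => hτ ▸ h x, fun h x => h t x rfl⟩)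

theorem Causal.tendsto_fst_symm {f : Gal ≃ₜ Gal} (hf : Causal f) :
    Tendsto (fun q => (f.symm q).1) (comap Prod.fst atTop) atTop := by
  refine tendsto_atTop.2 fun M => ?_
  filter_upwards [tendsto_comap.eventually (eventually_ge_atTop (f (M, 0)).1)] with q hq
  by_contra! h
  simpa using (hf _ (M, 0) h).trans_le hq

section AsymptoticVelocity

variable {α : Type*} {S : Set Gal} {v : E3}

theorem HasAsympVel.tendsto_velocity (hS : HasAsympVel S v) {l : Filter α} {p : α → Gal}
    (hpS : ∀ᶠ a in l, p a ∈ S) (hp : Tendsto (fun a => (p a).1) l atTop) :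
    Tendsto (fun a => velocity (p a)) l (𝓝 v) := by
  obtain ⟨t₀, γ, -, rfl, hγ⟩ := hS
  refine (hγ.comp hp).congr' ?_
  filter_upwards [hpS] with a ha
  obtain ⟨t, -, ht⟩ := ha
  rw [Function.comp_apply, ← ht]
  rfl

theorem HasAsympVel.unique {w : E3} (hv : HasAsympVel S v) (hw : HasAsympVel S w) : v = w := by
  obtain ⟨t₀, γ, -, rfl, hγ⟩ := hv
  exact tendsto_nhds_unique hγ <|
    hw.tendsto_velocity ((eventually_ge_atTop t₀).mono fun t ht => ⟨t, ht, rfl⟩) tendsto_id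

theorem hasAsympVel_ray (v : E3) : HasAsympVel (semitraj 0 fun t => t • v) v := by
  refine ⟨0, fun t => t • v, (continuous_id.smul continuous_const).continuousOn, rfl, ?_⟩
  refine tendsto_const_nhds.congr' ?_
  filter_upwards [eventually_ne_atTop 0] with t ht
  rw [inv_smul_smul₀ ht]

/-- The curve `t ↦ t • w t`, where `w` interpolates the velocities, has `γ t / t = w t`. -/
theorem exists_hasAsympVel_of_tendsto {p : ℕ → Gal} (hmono : StrictMono fun n => (p n).1)
    (htop : Tendsto (fun n => (p n).1) atTop atTop)
    (hv : Tendsto (fun n => velocity (p n)) atTop (𝓝 v)) :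
    ∃ S, HasAsympVel S v ∧ ∀ᶠ n in atTop, p n ∈ S := by
  set g := piecewiseLinear (fun n => (p n).1) fun n => velocity (p n)
  refine ⟨semitraj (p 0).1 fun t => t • g t, ⟨(p 0).1, fun t => t • g t,
    continuousOn_id.smul (continuousOn_piecewiseLinear hmono htop), rfl, ?_⟩, ?_⟩
  · refine (tendsto_piecewiseLinear hmono htop hv).congr' ?_
    filter_upwards [eventually_ne_atTop 0] with t ht
    rw [inv_smul_smul₀ ht]
  · filter_upwards [htop.eventually_gt_atTop 0] with n hn
    refine ⟨(p n).1, hmono.monotone n.zero_le, ?_⟩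
    simp only [g, piecewiseLinear_apply_node hmono, velocity, smul_inv_smul₀ hn.ne']

end AsymptoticVelocity

section AsymptoticTransform

variable {g : Gal ≃ₜ Gal} {α : Type*} {l : Filter α} [l.IsCountablyGenerated] {p : α → Gal}

theorem IsAsympTransform.tendsto_velocity {F : E3 → E3} (hg : IsAsympTransform g F) {v : E3}
    (hp : Tendsto (fun a => (p a).1) l atTop) (hgp : Tendsto (fun a => (g (p a)).1) l atTop)
    (hv : Tendsto (fun a => velocity (p a)) l (𝓝 v)) :
    Tendsto (fun a => velocity (g (p a))) l (𝓝 (F v)) := by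
  refine tendsto_of_subseq_tendsto fun ns hns => ?_
  obtain ⟨ms, hms, hmono⟩ := strictMono_subseq_of_tendsto_atTop (hp.comp hns)
  have hnms := hns.comp hms.tendsto_atTop
  obtain ⟨S, hS, hmem⟩ := exists_hasAsympVel_of_tendsto hmono (hp.comp hnms) (hv.comp hnms)
  exact ⟨ms, (hg v S hS).tendsto_velocity (hmem.mono fun k hk => mem_image_of_mem g hk)
    (hgp.comp hnms)⟩

theorem IsAsympTransform.eventually_velocity_mem (hg : IsAsympTransform g id) {K U : Set E3}
    (hK : IsCompact K) (hU : IsOpen U) (hKU : K ⊆ U)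
    (hp : Tendsto (fun a => (p a).1) l atTop) (hgp : Tendsto (fun a => (g (p a)).1) l atTop)
    (hpK : ∀ᶠ a in l, velocity (p a) ∈ K) : ∀ᶠ a in l, velocity (g (p a)) ∈ U := by
  by_contra h
  obtain ⟨ns, hns, hbad⟩ :=
    exists_seq_forall_of_frequently ((not_eventually.1 h).and_eventually hpK)
  obtain ⟨v, hvK, φ, hφ, hv⟩ := hK.tendsto_subseq fun n => (hbad n).2
  have hnφ := hns.comp hφ.tendsto_atTop
  obtain ⟨k, hk⟩ := ((hg.tendsto_velocity (hp.comp hnφ) (hgp.comp hnφ) hv).eventually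
    (hU.mem_nhds (hKU hvK))).exists
  exact (hbad (φ k)).1 hk

theorem IsAsympTransform.symm_id_of_asympReg (hg : IsAsympTransform g id)
    (hreg : AsympReg g.symm) : IsAsympTransform g.symm id := by
  obtain ⟨F, hF⟩ := hreg
  suffices F = id from this ▸ hF
  funext v
  have h := hg _ _ (hF v _ (hasAsympVel_ray v))
  simp only [image_image, Homeomorph.apply_symm_apply, image_id'] at h
  exact ((hasAsympVel_ray v).unique h).symm

end AsymptoticTransform

section CrossSections

variable {f : Gal ≃ₜ Gal} {Δ Δ' : Set E3} {ε : ℝ}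

theorem Causal.eventually_crossSec_cone_subset_image (hc : Causal f)
    (hsymm : IsAsympTransform f.symm id) (hΔ : Bornology.IsBounded Δ) (hε : 0 < ε)
    (hΔΔ' : thickening ε Δ ⊆ Δ') :
    ∀ᶠ t in atTop, crossSec (cone Δ) t ⊆ crossSec (f '' cone Δ') t := by
  rw [eventually_crossSec_subset_iff, ← eventually_inf_principal]
  set l := comap Prod.fst atTop ⊓ 𝓟 (cone Δ)
  have hq : Tendsto (fun q : Gal => q.1) l atTop := tendsto_comap.mono_left inf_le_left
  have hfq : Tendsto (fun q => (f.symm q).1) l atTop :=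
    hc.tendsto_fst_symm.mono_left inf_le_left
  have hK : ∀ᶠ q in l, velocity q ∈ closure Δ := by
    filter_upwards [mem_inf_of_right (mem_principal_self _), hq.eventually_gt_atTop 0]
      with q hqΔ hpos
    exact subset_closure ((mem_cone_iff hpos).1 hqΔ)
  filter_upwards [hsymm.eventually_velocity_mem (p := id) hΔ.isCompact_closure isOpen_thickening
    (self_subset_thickening hε _) hq hfq hK, hfq.eventually_gt_atTop 0] with q hU hpos
  rw [thickening_closure] at hU
  exact ⟨f.symm q, (mem_cone_iff hpos).2 (hΔΔ' hU), f.apply_symm_apply q⟩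

theorem Causal.eventually_crossSec_image_cone_subset (hc : Causal f)
    (hf : IsAsympTransform f id) (hΔ : Bornology.IsBounded Δ) (hε : 0 < ε)
    (hΔΔ' : thickening ε Δ ⊆ Δ') :
    ∀ᶠ t in atTop, crossSec (f '' cone Δ) t ⊆ crossSec (cone Δ') t := by
  rw [eventually_crossSec_subset_iff, ← eventually_inf_principal]
  set l := comap Prod.fst atTop ⊓ 𝓟 (f '' cone Δ)
  have hq : Tendsto (fun q : Gal => q.1) l atTop := tendsto_comap.mono_left inf_le_left
  have hfq : Tendsto (fun q => (f.symm q).1) l atTop :=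
    hc.tendsto_fst_symm.mono_left inf_le_left
  have hK : ∀ᶠ q in l, velocity (f.symm q) ∈ closure Δ := by
    filter_upwards [mem_inf_of_right (mem_principal_self _), hfq.eventually_gt_atTop 0]
      with q hqΔ hpos
    rw [f.image_eq_preimage_symm] at hqΔ
    exact subset_closure ((mem_cone_iff hpos).1 hqΔ)
  filter_upwards [hf.eventually_velocity_mem hΔ.isCompact_closure isOpen_thickening
    (self_subset_thickening hε _) hfq (hq.congr fun q => by rw [f.apply_symm_apply]) hK,
    hq.eventually_gt_atTop 0]
    with q hU hpos
  rw [f.apply_symm_apply, thickening_closure] at hU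
  exact (mem_cone_iff hpos).2 (hΔΔ' hU)

end CrossSections

theorem isBounded_interval (a b : Fin 3 → ℝ) : Bornology.IsBounded (interval a b) :=
  ((isCompact_Icc (a := a) (b := b)).image (EuclideanSpace.equiv (Fin 3) ℝ).symm.continuous
    ).isBounded.subset fun v hv =>
      ⟨v, ⟨fun i => (hv i).1.le, fun i => (hv i).2⟩, rfl⟩

theorem thickening_interval_subset (a b : Fin 3 → ℝ) (ε : ℝ) :
    thickening ε (interval a b) ⊆ interval (fun i => a i - ε) (fun i => b i + ε) := by
  intro v hv i
  obtain ⟨u, hu, huv⟩ := mem_thickening_iff.1 hv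
  have hi := abs_sub_lt_iff.1 ((PiLp.dist_apply_le v u i).trans_lt huv)
  obtain ⟨hau, hub⟩ := hu i
  constructor <;> dsimp only <;> linarith [hi.1, hi.2]

theorem stmt19_general (f : Gal ≃ₜ Gal) (hf : AsympIdentical f)
    (a b : Fin 3 → ℝ)
    (ε : ℝ) (hε : 0 < ε) :
    ∃ t₀ : ℝ, ∀ t ≥ t₀,
      crossSec (cone (interval (fun i => a i + ε) (fun i => b i - ε))) t ⊆
        crossSec (f '' cone (interval a b)) t ∧
      crossSec (f '' cone (interval a b)) t ⊆
        crossSec (cone (interval (fun i => a i - ε) (fun i => b i + ε))) t := by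
  obtain ⟨hc, ⟨-, hreg⟩, hid⟩ := hf
  have hshrunk :
      thickening ε (interval (fun i => a i + ε) (fun i => b i - ε)) ⊆ interval a b := by
    simpa using thickening_interval_subset (fun i => a i + ε) (fun i => b i - ε) ε
  exact eventually_atTop.1 <|
    (hc.eventually_crossSec_cone_subset_image (hid.symm_id_of_asympReg hreg)
      (isBounded_interval _ _) hε hshrunk).and
    (hc.eventually_crossSec_image_cone_subset hid (isBounded_interval a b) hε
      (thickening_interval_subset a b ε))

/-- Let `f` be an asymptotically identical transformation of
`G = ℝ × ℝ³` and `I = (a, b] ⊆ ℝ³` a half-open interval with `aᵢ < bᵢ`.  For every `ε`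
with `0 < ε < min{b₁−a₁, b₂−a₂, b₃−a₃}/2`, with `I₋ε := (a+ε, b−ε]` and
`I₊ε := (a−ε, b+ε]`, there exists `t₀` such that for all `t ≥ t₀` one has the inclusions
of time-`t` cross-sections `I₋εᶜ(t) ⊆ f(Iᶜ)(t) ⊆ I₊εᶜ(t)`. -/
theorem stmt19 (f : Gal ≃ₜ Gal) (hf : AsympIdentical f)
    (a b : Fin 3 → ℝ) (hab : ∀ i, a i < b i)
    (ε : ℝ) (hε : 0 < ε) (hε' : ∀ i, ε < (b i - a i) / 2) :
    ∃ t₀ : ℝ, ∀ t ≥ t₀,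
      crossSec (cone (interval (fun i => a i + ε) (fun i => b i - ε))) t ⊆
        crossSec (f '' cone (interval a b)) t ∧
      crossSec (f '' cone (interval a b)) t ⊆
        crossSec (cone (interval (fun i => a i - ε) (fun i => b i + ε))) t :=
  stmt19_general f hf a b ε hε
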